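/- Let M be a one-way DPPDA satisfying the normal-form properties and let G_M be the PEG constructed from M. For every input w = w₁⋯w_n (w_i ∈ Σ), all states q, p, every stack symbol Z, and every position i with 1 ≤ i ≤ n+1: (1) there exists j ≥ i with R([qZp↓], w_i⋯w_n) = w_j⋯w_n if and only if for every tag i' the run of M from configuration (q, (Z, i'), i) ends by popping Z in state p at head position j, with final pop direction ↓; (2) there exists j ≥ i with R([qZp̄], w_i⋯w_n) = w_j⋯w_n if and only if for every tag i' the run of M from (q, (Z, i'), i) ends by popping Z in state p at head position i', with final pop direction ↑; (3) R([qZp↑], w_i⋯w_n) = w_i⋯w_n if and only if for every tag i' the run of M from (q, (Z, i'), i) ends by popping Z in state p at head position i', with final pop direction ↑. (Here j = n+1 corresponds to R returning the empty word, i.e., the head standing on the right end marker.) -/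

import Mathlib

/-!
A run of `M` that pops a stack entry `Z` has an inductive description (`PopRun`): either `Z`
is popped at once, or a symbol `X` is pushed, the run of `X` pops it, and the run of `Z`
resumes at the position where `X` was popped (`↓`) or pushed (`↑`). The rule of `[qZp t]`
mirrors exactly this: it checks or consumes the scanned symbol and then chains `[rXs↕]` with
`[sZp t]`, the intermediate state `s` being guessed by a prioritized choice in which only
the correct guess can succeed.

By induction on `PopRun` we compute the result of every `[qZp t]`, failures included (these
are needed because of prioritized choice), for all target states `p` at once. Conversely, a
successful parse yields some `PopRun` by strong induction on the size of the derivation, and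
since PEG parsing is deterministic, the computed result pins down its final state, direction
and position. Finally `EndsPop` agrees with `PopRun`, because a run from any stack decomposes
into consecutive `PopRun`s of its entries (`StackRun`), which follows by induction along the
run.
-/

/-! ### Parsing expression grammars -/

/-- Parsing expressions over nonterminals `N` and input alphabet `A`:
`ε`, terminals, nonterminals, sequence, prioritized choice, not-predicate. -/
inductive PExp (N A : Type) : Type where
  | eps : PExp N A
  | term : A → PExp N A
  | nt : N → PExp N A
  | seq : PExp N A → PExp N A → PExp N A
  | choice : PExp N A → PExp N A → PExp N A
  | not : PExp N A → PExp N A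

/-- A parsing expression grammar: one rule per nonterminal, and an axiom. -/
structure PEG (N A : Type) : Type where
  rule : N → PExp N A
  start : N

/-- Big-step relational semantics of the PEG parsing function `R`:
`Parses G e w r` means `R(e, w) = r`, where `r = none` encodes the failure `F`
and `r = some s` means that `e` consumed a prefix of `w` leaving the suffix `s`.
`R(e, w)` is defined iff `∃ r, Parses G e w r`. -/
inductive Parses {N A : Type} (G : PEG N A) : PExp N A → List A → Option (List A) → Prop where
  | eps (w : List A) : Parses G .eps w (some w)
  | term_ok (a : A) (s : List A) : Parses G (.term a) (a :: s) (some s)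
  | term_mismatch {a b : A} (s : List A) (h : a ≠ b) : Parses G (.term a) (b :: s) none
  | term_nil (a : A) : Parses G (.term a) [] none
  | nt {B : N} {w : List A} {r : Option (List A)} :
      Parses G (G.rule B) w r → Parses G (.nt B) w r
  | seq_ok {e₁ e₂ : PExp N A} {w w' : List A} {r : Option (List A)} :
      Parses G e₁ w (some w') → Parses G e₂ w' r → Parses G (.seq e₁ e₂) w r
  | seq_fail {e₁ e₂ : PExp N A} {w : List A} :
      Parses G e₁ w none → Parses G (.seq e₁ e₂) w none
  | choice_fst {e₁ e₂ : PExp N A} {w w' : List A} :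
      Parses G e₁ w (some w') → Parses G (.choice e₁ e₂) w (some w')
  | choice_snd {e₁ e₂ : PExp N A} {w : List A} {r : Option (List A)} :
      Parses G e₁ w none → Parses G e₂ w r → Parses G (.choice e₁ e₂) w r
  | not_succ {e : PExp N A} {w : List A} :
      Parses G e w none → Parses G (.not e) w (some w)
  | not_fail {e : PExp N A} {w w' : List A} :
      Parses G e w (some w') → Parses G (.not e) w none

/-- The language generated by a PEG: `L(G) = {w | R(S, w) = ε}`. -/
def PEG.Lang {N A : Type} (G : PEG N A) : Set (List A) :=
  {w | Parses G (.nt G.start) w (some [])}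

/-- A PEG is complete if `R(S, w)` is defined for every input `w`. -/
def PEG.Complete {N A : Type} (G : PEG N A) : Prop :=
  ∀ w : List A, ∃ r, Parses G (.nt G.start) w r

/-! ### Deterministic pointer pushdown automata -/

/-- Tape symbols: the input letters plus the end markers `▷` and `◁`. -/
inductive TSym (A : Type) : Type where
  | lmark : TSym A
  | rmark : TSym A
  | sym : A → TSym A

/-- The symbol in cell `j` of the tape `▷w◁` (cell `0` holds `▷`, cell `|w|+1` holds `◁`). -/
def tapeNth {A : Type} (w : List A) (j : ℕ) : TSym A :=
  if j = 0 then .lmark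
  else
    match w[j - 1]? with
    | some a => .sym a
    | none => .rmark

/-- Head directions: move left, stay, return to the stored pointer, move right. -/
inductive Dir : Type where
  | left | down | up | right
deriving DecidableEq

/-- A (two-way) deterministic pointer pushdown automaton.  A transition
`trans q a Z = some (p, β, d)` pops `(Z, i)` when `β = []` (moving the head by `d`,
where `d = up` returns the head to the position `i` stored with `Z`), and pushes `β`
above `Z` when `β ≠ []` (moving the head by `d`).  Moves `↑` must pop (`α = ε`),
moving left off `▷` and right off `◁` is forbidden. -/
structure DPPDA (Q A Γ : Type) : Type where
  trans : Q → TSym A → Γ → Option (Q × List Γ × Dir)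
  init : Q
  Z0 : Γ
  final : Q → Bool
  up_pop : ∀ q a Z p β, trans q a Z = some (p, β, Dir.up) → β = []
  no_left_lmark : ∀ q Z p β, trans q TSym.lmark Z ≠ some (p, β, Dir.left)
  no_right_rmark : ∀ q Z p β, trans q TSym.rmark Z ≠ some (p, β, Dir.right)

/-- A configuration: state, stack of symbols tagged with the head position at which
they were pushed (top of the stack is the head of the list), and head position. -/
structure Conf (Q Γ : Type) : Type where
  state : Q
  stack : List (Γ × ℕ)
  pos : ℕ

/-- One move of a DPPDA on input `w` (`none` when no move is possible). -/
def DPPDA.step {Q A Γ : Type} (M : DPPDA Q A Γ) (w : List A) (c : Conf Q Γ) :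
    Option (Conf Q Γ) :=
  match c.stack with
  | [] => none
  | (Z, i) :: rest =>
    match M.trans c.state (tapeNth w c.pos) Z with
    | none => none
    | some (p, β, d) =>
      let j' : ℕ :=
        match d with
        | Dir.left => c.pos - 1
        | Dir.down => c.pos
        | Dir.up => i
        | Dir.right => c.pos + 1
      match β with
      | [] => some ⟨p, rest, j'⟩
      | X :: Xs => some ⟨p, ((X :: Xs).map fun Y => (Y, j')) ++ (Z, i) :: rest, j'⟩

/-- Reachability between configurations. -/
def DPPDA.Reaches {Q A Γ : Type} (M : DPPDA Q A Γ) (w : List A) :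
    Conf Q Γ → Conf Q Γ → Prop :=
  Relation.ReflTransGen (fun c c' => M.step w c = some c')

/-- Acceptance: from the initial configuration `(q₀, (Z₀, 0), 0)` the automaton
reaches the right end marker with empty stack in a final state. -/
def DPPDA.Accepts {Q A Γ : Type} (M : DPPDA Q A Γ) (w : List A) : Prop :=
  ∃ qf : Q, M.final qf = true ∧
    M.Reaches w ⟨M.init, [(M.Z0, 0)], 0⟩ ⟨qf, [], w.length + 1⟩

/-- A one-way DPPDA: moves with direction `←` are forbidden. -/
def DPPDA.OneWay {Q A Γ : Type} (M : DPPDA Q A Γ) : Prop :=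
  ∀ q a Z p β, M.trans q a Z ≠ some (p, β, Dir.left)

/-- The normal-form properties of a one-way DPPDA used in the DPPDA-to-PEG
construction: pops only use `↓`/`↑`, pushes push exactly one symbol, `Z₀` is never
pushed (so it occurs only at the bottom of the stack), and pops of `Z₀` (in
particular the final pop) have direction `↓`. -/
def DPPDA.NormalForm {Q A Γ : Type} (M : DPPDA Q A Γ) : Prop :=
  M.OneWay ∧
  (∀ q a Z p d, M.trans q a Z = some (p, ([] : List Γ), d) →
    d = Dir.down ∨ d = Dir.up) ∧
  (∀ q a Z p β d, M.trans q a Z = some (p, β, d) → β.length ≤ 1) ∧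
  (∀ q a Z p β d, M.trans q a Z = some (p, β, d) → M.Z0 ∉ β) ∧
  (∀ q a p d, M.trans q a M.Z0 = some (p, ([] : List Γ), d) → d = Dir.down)

/-- `EndsPop M w q Z t i p d j`: the run of `M` on `w` starting from the
configuration `(q, (Z, t), i)` (a stack consisting of the single entry `Z` tagged
with `t`, head at `i`) eventually pops `Z` — emptying the stack — in state `p`,
via a final pop move with direction `d`, leaving the head at position `j`. -/
def EndsPop {Q A Γ : Type} (M : DPPDA Q A Γ) (w : List A) (q : Q) (Z : Γ)
    (t i : ℕ) (p : Q) (d : Dir) (j : ℕ) : Prop :=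
  ∃ c : Conf Q Γ, M.Reaches w ⟨q, [(Z, t)], i⟩ c ∧ c.stack = [(Z, t)] ∧
    M.trans c.state (tapeNth w c.pos) Z = some (p, ([] : List Γ), d) ∧
    M.step w c = some ⟨p, [], j⟩

/-! ### The PEG constructed from a one-way DPPDA in normal form -/

/-- Tags of the constructed nonterminals: `[qZp↓]`, `[qZp↑]`, `[qZp↕]`, `[qZp̄]`. -/
inductive PTag : Type where
  | dn | up | ud | bar
deriving DecidableEq

/-- Nonterminals of the constructed PEG: the axiom `none`, and `some (q, Z, p, t)`
standing for `[qZp t]`. -/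
abbrev NTof (Q Γ : Type) : Type := Option (Q × Γ × Q × PTag)

/-- The failure expression `F = !ε`. -/
def failE {N A : Type} : PExp N A := .not .eps

/-- Prioritized choice of a list of alternatives (empty choice is failure). -/
def choiceE {N A : Type} (l : List (PExp N A)) : PExp N A := l.foldr PExp.choice failE

/-- The any-character expression `• = a₁ / ⋯ / a_k`. -/
noncomputable def anyE {N A : Type} [Fintype A] : PExp N A :=
  choiceE (((Finset.univ : Finset A).toList).map PExp.term)

/-- The end-of-input expression `!•`. -/
noncomputable def endE {N A : Type} [Fintype A] : PExp N A := .not anyE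

/-- The expression consuming the tape symbol `a` (only input letters can be consumed). -/
def consumeE {N A : Type} : TSym A → PExp N A
  | .sym c => .term c
  | _ => failE

/-- The and-predicate `&a` testing for the tape symbol `a` without consuming it
(`◁` corresponds to the end of the remaining input). -/
noncomputable def testE {N A : Type} [Fintype A] : TSym A → PExp N A
  | .sym c => .not (.not (.term c))
  | .rmark => endE
  | .lmark => failE

/-- The right-hand-side alternative for the nonterminal `[qZp t]` contributed by the
tape symbol `a`, determined by the transition `δ(q, a, Z)` as in the construction. -/
noncomputable def altOf {Q A Γ : Type} [Fintype Q] [DecidableEq Q] [Fintype A]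
    (M : DPPDA Q A Γ) (q : Q) (Z : Γ) (p : Q) (t : PTag) (a : TSym A) :
    PExp (NTof Q Γ) A :=
  match M.trans q a Z with
  | none => failE
  | some (r, β, d) =>
    match β, d, t with
    -- push with `→` : `a [rXs↕][sZp·]` (with `&(⋯)` for the `↑`-version)
    | [X], Dir.right, PTag.dn =>
        choiceE (((Finset.univ : Finset Q).toList).map fun s =>
          PExp.seq (consumeE a)
            (PExp.seq (PExp.nt (some (r, X, s, PTag.ud)))
              (PExp.nt (some (s, Z, p, PTag.dn)))))
    | [X], Dir.right, PTag.bar =>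
        choiceE (((Finset.univ : Finset Q).toList).map fun s =>
          PExp.seq (consumeE a)
            (PExp.seq (PExp.nt (some (r, X, s, PTag.ud)))
              (PExp.nt (some (s, Z, p, PTag.bar)))))
    | [X], Dir.right, PTag.up =>
        choiceE (((Finset.univ : Finset Q).toList).map fun s =>
          PExp.not (PExp.not (PExp.seq (consumeE a)
            (PExp.seq (PExp.nt (some (r, X, s, PTag.ud)))
              (PExp.nt (some (s, Z, p, PTag.bar)))))))
    -- push with `↓` : `(&a) [rXs↕][sZp·]` (with `&(⋯)` for the `↑`-version)
    | [X], Dir.down, PTag.dn =>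
        choiceE (((Finset.univ : Finset Q).toList).map fun s =>
          PExp.seq (testE a)
            (PExp.seq (PExp.nt (some (r, X, s, PTag.ud)))
              (PExp.nt (some (s, Z, p, PTag.dn)))))
    | [X], Dir.down, PTag.bar =>
        choiceE (((Finset.univ : Finset Q).toList).map fun s =>
          PExp.seq (testE a)
            (PExp.seq (PExp.nt (some (r, X, s, PTag.ud)))
              (PExp.nt (some (s, Z, p, PTag.bar)))))
    | [X], Dir.down, PTag.up =>
        choiceE (((Finset.univ : Finset Q).toList).map fun s =>
          PExp.seq (testE a)
            (PExp.not (PExp.not (PExp.seq (PExp.nt (some (r, X, s, PTag.ud)))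
              (PExp.nt (some (s, Z, p, PTag.bar)))))))
    -- pop with `↑`
    | [], Dir.up, PTag.dn => failE
    | [], Dir.up, PTag.bar => if r = p then testE a else failE
    | [], Dir.up, PTag.up => if r = p then testE a else failE
    -- pop with `↓`
    | [], Dir.down, PTag.dn => if r = p then testE a else failE
    | [], Dir.down, PTag.bar => failE
    | [], Dir.down, PTag.up => failE
    -- cases excluded by the normal form
    | _, _, _ => failE

/-- The rules of the constructed PEG: `S ← [q₀Z₀q_f¹↓] / ⋯ / [q₀Z₀q_f^m↓]` over all
final states, `[qZp↕] ← [qZp↓] / [qZp↑]`, and for the remaining nonterminals the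
prioritized choice over all tape symbols `a` of the alternatives `altOf`. -/
noncomputable def ruleOf {Q A Γ : Type} [Fintype Q] [DecidableEq Q] [Fintype A]
    (M : DPPDA Q A Γ) : NTof Q Γ → PExp (NTof Q Γ) A
  | none =>
      choiceE (((((Finset.univ : Finset Q).toList).filter fun qf => M.final qf)).map
        fun qf => PExp.nt (some (M.init, M.Z0, qf, PTag.dn)))
  | some (q, Z, p, PTag.ud) =>
      PExp.choice (PExp.nt (some (q, Z, p, PTag.dn))) (PExp.nt (some (q, Z, p, PTag.up)))
  | some (q, Z, p, t) =>
      choiceE ((TSym.rmark :: (((Finset.univ : Finset A).toList).map TSym.sym)).map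
        (altOf M q Z p t))

/-- The PEG `G_M` constructed from a one-way DPPDA `M` in normal form. -/
noncomputable def PEGof {Q A Γ : Type} [Fintype Q] [DecidableEq Q] [Fintype A]
    (M : DPPDA Q A Γ) : PEG (NTof Q Γ) A :=
  ⟨ruleOf M, none⟩

section PEGSemantics

variable {N A : Type} {G : PEG N A}

/-- Derivations of `Parses` annotated with their size, for strong induction through
nested nonterminals. -/
inductive ParsesN (G : PEG N A) : ℕ → PExp N A → List A → Option (List A) → Prop where
  | eps (n : ℕ) (w : List A) : ParsesN G n .eps w (some w)
  | term_ok (n : ℕ) (a : A) (s : List A) : ParsesN G n (.term a) (a :: s) (some s)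
  | term_mismatch {a b : A} (n : ℕ) (s : List A) (h : a ≠ b) :
      ParsesN G n (.term a) (b :: s) none
  | term_nil (n : ℕ) (a : A) : ParsesN G n (.term a) [] none
  | nt {n : ℕ} {B : N} {w : List A} {r : Option (List A)} :
      ParsesN G n (G.rule B) w r → ParsesN G (n + 1) (.nt B) w r
  | seq_ok {n m : ℕ} {e₁ e₂ : PExp N A} {w w' : List A} {r : Option (List A)} :
      ParsesN G n e₁ w (some w') → ParsesN G m e₂ w' r →
        ParsesN G (n + m + 1) (.seq e₁ e₂) w r
  | seq_fail {n : ℕ} {e₁ e₂ : PExp N A} {w : List A} :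
      ParsesN G n e₁ w none → ParsesN G (n + 1) (.seq e₁ e₂) w none
  | choice_fst {n : ℕ} {e₁ e₂ : PExp N A} {w w' : List A} :
      ParsesN G n e₁ w (some w') → ParsesN G (n + 1) (.choice e₁ e₂) w (some w')
  | choice_snd {n m : ℕ} {e₁ e₂ : PExp N A} {w : List A} {r : Option (List A)} :
      ParsesN G n e₁ w none → ParsesN G m e₂ w r →
        ParsesN G (n + m + 1) (.choice e₁ e₂) w r
  | not_succ {n : ℕ} {e : PExp N A} {w : List A} :
      ParsesN G n e w none → ParsesN G (n + 1) (.not e) w (some w)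
  | not_fail {n : ℕ} {e : PExp N A} {w w' : List A} :
      ParsesN G n e w (some w') → ParsesN G (n + 1) (.not e) w none

theorem ParsesN.toParses {n : ℕ} {e : PExp N A} {w : List A} {r : Option (List A)}
    (h : ParsesN G n e w r) : Parses G e w r := by
  induction h with
  | eps => exact .eps _
  | term_ok => exact .term_ok _ _
  | term_mismatch _ _ h => exact .term_mismatch _ h
  | term_nil => exact .term_nil _
  | nt _ ih => exact .nt ih
  | seq_ok _ _ ih₁ ih₂ => exact .seq_ok ih₁ ih₂
  | seq_fail _ ih => exact .seq_fail ih
  | choice_fst _ ih => exact .choice_fst ih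
  | choice_snd _ _ ih₁ ih₂ => exact .choice_snd ih₁ ih₂
  | not_succ _ ih => exact .not_succ ih
  | not_fail _ ih => exact .not_fail ih

theorem Parses.exists_parsesN {e : PExp N A} {w : List A} {r : Option (List A)}
    (h : Parses G e w r) : ∃ n, ParsesN G n e w r := by
  induction h with
  | eps => exact ⟨0, .eps _ _⟩
  | term_ok => exact ⟨0, .term_ok _ _ _⟩
  | term_mismatch _ h => exact ⟨0, .term_mismatch _ _ h⟩
  | term_nil => exact ⟨0, .term_nil _ _⟩
  | nt _ ih => obtain ⟨n, h⟩ := ih; exact ⟨_, .nt h⟩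
  | seq_ok _ _ ih₁ ih₂ =>
      obtain ⟨n, h₁⟩ := ih₁; obtain ⟨m, h₂⟩ := ih₂; exact ⟨_, .seq_ok h₁ h₂⟩
  | seq_fail _ ih => obtain ⟨n, h⟩ := ih; exact ⟨_, .seq_fail h⟩
  | choice_fst _ ih => obtain ⟨n, h⟩ := ih; exact ⟨_, .choice_fst h⟩
  | choice_snd _ _ ih₁ ih₂ =>
      obtain ⟨n, h₁⟩ := ih₁; obtain ⟨m, h₂⟩ := ih₂; exact ⟨_, .choice_snd h₁ h₂⟩
  | not_succ _ ih => obtain ⟨n, h⟩ := ih; exact ⟨_, .not_succ h⟩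
  | not_fail _ ih => obtain ⟨n, h⟩ := ih; exact ⟨_, .not_fail h⟩

theorem Parses.unique {e : PExp N A} {w : List A} {r r' : Option (List A)}
    (h : Parses G e w r) (h' : Parses G e w r') : r = r' := by
  induction h generalizing r' with
  | eps | term_nil => cases h'; rfl
  | term_ok =>
      cases h' with
      | term_ok => rfl
      | term_mismatch _ hne => exact absurd rfl hne
  | term_mismatch _ hne =>
      cases h' with
      | term_ok => exact absurd rfl hne
      | term_mismatch => rfl
  | nt _ ih => cases h' with | nt h' => exact ih h'
  | seq_ok _ _ ih₁ ih₂ =>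
      cases h' with
      | seq_ok h₁ h₂ => cases ih₁ h₁; exact ih₂ h₂
      | seq_fail h₁ => cases ih₁ h₁
  | seq_fail _ ih =>
      cases h' with
      | seq_ok h₁ => cases ih h₁
      | seq_fail => rfl
  | choice_fst _ ih =>
      cases h' with
      | choice_fst h₁ => exact ih h₁
      | choice_snd h₁ => cases ih h₁
  | choice_snd _ _ ih₁ ih₂ =>
      cases h' with
      | choice_fst h₁ => cases ih₁ h₁
      | choice_snd _ h₂ => exact ih₂ h₂
  | not_succ _ ih =>
      cases h' with
      | not_succ => rfl
      | not_fail h₁ => cases ih h₁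
  | not_fail _ ih =>
      cases h' with
      | not_succ h₁ => cases ih h₁
      | not_fail => rfl

theorem parses_failE (w : List A) : Parses G failE w none :=
  .not_fail (.eps w)

theorem Parses.choice {e₁ e₂ : PExp N A} {w : List A} {r₁ r₂ : Option (List A)}
    (h₁ : Parses G e₁ w r₁) (h₂ : Parses G e₂ w r₂) :
    Parses G (.choice e₁ e₂) w (r₁.or r₂) := by
  cases r₁ with
  | none => exact .choice_snd h₁ h₂
  | some _ => exact .choice_fst h₁

theorem Parses.seq_ite {c : Prop} [Decidable c] {e₁ e₂ : PExp N A} {w v : List A}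
    {r : Option (List A)} (h₁ : Parses G e₁ w (if c then some v else none))
    (h₂ : c → Parses G e₂ v r) : Parses G (.seq e₁ e₂) w (if c then r else none) := by
  split_ifs at h₁ ⊢ with hc
  · exact .seq_ok h₁ (h₂ hc)
  · exact .seq_fail h₁

theorem Parses.andPred {e : PExp N A} {w : List A} {r : Option (List A)}
    (h : Parses G e w r) : Parses G (.not (.not e)) w (r.map fun _ => w) := by
  cases r with
  | none => exact .not_fail (.not_succ h)
  | some _ => exact .not_succ (.not_fail h)

theorem parses_choiceE_none {l : List (PExp N A)} {w : List A}
    (h : ∀ e ∈ l, Parses G e w none) : Parses G (choiceE l) w none := by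
  induction l with
  | nil => exact parses_failE w
  | cons e l ih =>
      exact .choice_snd (h e List.mem_cons_self)
        (ih fun e' he' => h e' (List.mem_cons_of_mem _ he'))

theorem parses_choiceE_append_cons {l₁ l₂ : List (PExp N A)} {e : PExp N A} {w s : List A}
    (h₁ : ∀ e' ∈ l₁, Parses G e' w none) (h : Parses G e w (some s)) :
    Parses G (choiceE (l₁ ++ e :: l₂)) w (some s) := by
  induction l₁ with
  | nil => exact .choice_fst h
  | cons e' l₁ ih =>
      exact .choice_snd (h₁ e' List.mem_cons_self)
        (ih fun e'' he'' => h₁ e'' (List.mem_cons_of_mem _ he''))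

theorem parses_choiceE_map_of_nodup {α : Type} {f : α → PExp N A} {l : List α} {a₀ : α}
    (hmem : a₀ ∈ l) (hnd : l.Nodup) {w : List A} {r : Option (List A)}
    (h₀ : Parses G (f a₀) w r) (hfail : ∀ a ∈ l, a ≠ a₀ → Parses G (f a) w none) :
    Parses G (choiceE (l.map f)) w r := by
  classical
  cases r with
  | none =>
      refine parses_choiceE_none fun e he => ?_
      obtain ⟨a, ha, rfl⟩ := List.mem_map.mp he
      by_cases haa : a = a₀
      · exact haa ▸ h₀
      · exact hfail a ha haa
  | some s =>
      obtain ⟨l₁, l₂, rfl⟩ := List.append_of_mem hmem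
      rw [List.map_append, List.map_cons]
      refine parses_choiceE_append_cons (fun e he => ?_) h₀
      obtain ⟨a, ha, rfl⟩ := List.mem_map.mp he
      refine hfail a (by simp [ha]) fun haa => ?_
      exact List.disjoint_of_nodup_append hnd (haa ▸ ha) List.mem_cons_self

theorem parses_choiceE_univ {α : Type} [Fintype α] [DecidableEq α] {f : α → PExp N A}
    {a₀ : α} {w : List A} {r : Option (List A)}
    (h : ∀ a, Parses G (f a) w (if a = a₀ then r else none)) :
    Parses G (choiceE ((Finset.univ : Finset α).toList.map f)) w r := by
  refine parses_choiceE_map_of_nodup (a₀ := a₀) (by simp) (Finset.nodup_toList _) ?_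
    fun a _ ha => ?_
  · simpa using h a₀
  · simpa [ha] using h a

theorem ParsesN.not_failE_some {n : ℕ} {w s : List A} :
    ¬ ParsesN G n (failE : PExp N A) w (some s) := by
  rintro (_ | _ | _ | _ | _ | _ | _ | _ | _ | ⟨⟨⟩⟩)

theorem ParsesN.nt_inv {n : ℕ} {B : N} {w : List A} {r : Option (List A)}
    (h : ParsesN G n (.nt B) w r) : ∃ m < n, ParsesN G m (G.rule B) w r := by
  cases h with | nt h => exact ⟨_, Nat.lt_succ_self _, h⟩

theorem ParsesN.seq_some_inv {n : ℕ} {e₁ e₂ : PExp N A} {w s : List A}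
    (h : ParsesN G n (.seq e₁ e₂) w (some s)) :
    ∃ v, ∃ n₁ < n, ∃ n₂ < n,
      ParsesN G n₁ e₁ w (some v) ∧ ParsesN G n₂ e₂ v (some s) := by
  cases h with | seq_ok h₁ h₂ => exact ⟨_, _, by omega, _, by omega, h₁, h₂⟩

theorem ParsesN.choice_some_inv {n : ℕ} {e₁ e₂ : PExp N A} {w s : List A}
    (h : ParsesN G n (.choice e₁ e₂) w (some s)) :
    ∃ m < n, ParsesN G m e₁ w (some s) ∨ ParsesN G m e₂ w (some s) := by
  cases h with
  | choice_fst h => exact ⟨_, by omega, .inl h⟩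
  | choice_snd _ h => exact ⟨_, by omega, .inr h⟩

theorem ParsesN.not_some_inv {n : ℕ} {e : PExp N A} {w s : List A}
    (h : ParsesN G n (.not e) w (some s)) : s = w ∧ ∃ m < n, ParsesN G m e w none := by
  cases h with | not_succ h => exact ⟨rfl, _, by omega, h⟩

theorem ParsesN.andPred_some_inv {n : ℕ} {e : PExp N A} {w s : List A}
    (h : ParsesN G n (.not (.not e)) w (some s)) :
    s = w ∧ ∃ v, ∃ m < n, ParsesN G m e w (some v) := by
  obtain ⟨rfl, m, hm, h⟩ := h.not_some_inv
  cases h with | not_fail h => exact ⟨rfl, _, _, by omega, h⟩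

theorem ParsesN.choiceE_some_inv {l : List (PExp N A)} {n : ℕ} {w s : List A}
    (h : ParsesN G n (choiceE l) w (some s)) :
    ∃ e ∈ l, ∃ m < n, ParsesN G m e w (some s) := by
  induction l generalizing n with
  | nil => exact absurd h ParsesN.not_failE_some
  | cons e l ih =>
      obtain ⟨m, hm, h | h⟩ := h.choice_some_inv
      · exact ⟨e, List.mem_cons_self, m, hm, h⟩
      · obtain ⟨e', he', m', hm', h'⟩ := ih h
        exact ⟨e', List.mem_cons_of_mem _ he', m', by omega, h'⟩

end PEGSemantics

section Tape

variable {N A : Type} {G : PEG N A} {w : List A} {i : ℕ}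

theorem tapeNth_of_drop_eq_cons {c : A} {s : List A} (hi : 1 ≤ i)
    (h : w.drop (i - 1) = c :: s) : tapeNth w i = .sym c := by
  have hc : w[i - 1]? = some c := by rw [← List.head?_drop, h]; rfl
  rw [tapeNth, if_neg (by omega), hc]

theorem tapeNth_of_drop_eq_nil (hi : 1 ≤ i) (h : w.drop (i - 1) = []) :
    tapeNth w i = .rmark := by
  have hc : w[i - 1]? = none := by rw [← List.head?_drop, h]; rfl
  rw [tapeNth, if_neg (by omega), hc]

theorem tapeNth_of_length_lt (h : w.length < i) : tapeNth w i = .rmark :=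
  tapeNth_of_drop_eq_nil (by omega) (List.drop_eq_nil_of_le (by omega))

theorem drop_eq_of_drop_sub_one_eq_cons {c : A} {s : List A} (hi : 1 ≤ i)
    (h : w.drop (i - 1) = c :: s) : s = w.drop i := by
  have := List.tail_drop (l := w) (i := i - 1)
  rwa [h, Nat.sub_add_cancel hi] at this

theorem eq_of_drop_sub_one_eq {j k : ℕ} (hj : 1 ≤ j) (hjw : j ≤ w.length + 1) (hk : 1 ≤ k)
    (hkw : k ≤ w.length + 1) (h : w.drop (j - 1) = w.drop (k - 1)) : j = k := by
  have := congrArg List.length h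
  simp only [List.length_drop] at this
  omega

theorem parses_consumeE_tapeNth (hi : 1 ≤ i) (h : tapeNth w i ≠ .rmark) :
    Parses G (consumeE (tapeNth w i)) (w.drop (i - 1)) (some (w.drop i)) := by
  cases hd : w.drop (i - 1) with
  | nil => exact absurd (tapeNth_of_drop_eq_nil hi hd) h
  | cons c s =>
      rw [tapeNth_of_drop_eq_cons hi hd, drop_eq_of_drop_sub_one_eq_cons hi hd]
      exact .term_ok c _

theorem parses_consumeE_of_ne {a : TSym A} (hi : 1 ≤ i) (ha : a ≠ tapeNth w i) :
    Parses G (consumeE a) (w.drop (i - 1)) none := by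
  cases a with
  | lmark | rmark => exact parses_failE _
  | sym c =>
      cases hd : w.drop (i - 1) with
      | nil => exact .term_nil c
      | cons b s =>
          rw [tapeNth_of_drop_eq_cons hi hd] at ha
          exact .term_mismatch s fun hcb => ha (hcb ▸ rfl)

theorem ParsesN.consumeE_some_inv {a : TSym A} {n : ℕ} {u s : List A}
    (h : ParsesN G n (consumeE a) u (some s)) : s = u.tail := by
  cases a with
  | lmark | rmark => exact absurd h ParsesN.not_failE_some
  | sym c => cases h; rfl

end Tape

section TapeTests

variable {N A : Type} [Fintype A] {G : PEG N A} {w : List A} {i : ℕ}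

theorem parses_anyE_cons (c : A) (s : List A) : Parses G anyE (c :: s) (some s) := by
  classical
  have key : ∀ l : List A, c ∈ l →
      Parses G (choiceE (l.map PExp.term)) (c :: s) (some s) := by
    intro l hl
    induction l with
    | nil => cases hl
    | cons b l ih =>
        by_cases hbc : b = c
        · exact hbc ▸ .choice_fst (.term_ok _ _)
        · exact .choice_snd (.term_mismatch s hbc)
            (ih ((List.mem_cons.mp hl).resolve_left (Ne.symm hbc)))
  exact key _ (by simp)

theorem parses_anyE_nil : Parses G (anyE : PExp N A) [] none :=
  parses_choiceE_none fun e he => by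
    obtain ⟨a, -, rfl⟩ := List.mem_map.mp he
    exact .term_nil a

theorem parses_testE_tapeNth (hi : 1 ≤ i) :
    Parses G (testE (tapeNth w i)) (w.drop (i - 1)) (some (w.drop (i - 1))) := by
  cases h : w.drop (i - 1) with
  | nil => rw [tapeNth_of_drop_eq_nil hi h]; exact .not_succ parses_anyE_nil
  | cons c s => rw [tapeNth_of_drop_eq_cons hi h]; exact .not_succ (.not_fail (.term_ok c s))

theorem parses_testE_of_ne {a : TSym A} (hi : 1 ≤ i) (ha : a ≠ tapeNth w i) :
    Parses G (testE a) (w.drop (i - 1)) none := by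
  cases hd : w.drop (i - 1) with
  | nil =>
      rw [tapeNth_of_drop_eq_nil hi hd] at ha
      cases a with
      | lmark => exact parses_failE _
      | rmark => exact absurd rfl ha
      | sym c => exact .not_fail (.not_succ (.term_nil c))
  | cons b s =>
      rw [tapeNth_of_drop_eq_cons hi hd] at ha
      cases a with
      | lmark => exact parses_failE _
      | rmark => exact .not_fail (parses_anyE_cons b s)
      | sym c => exact .not_fail (.not_succ (.term_mismatch s fun hcb => ha (hcb ▸ rfl)))

theorem ParsesN.testE_some_inv {a : TSym A} {n : ℕ} {u s : List A}
    (h : ParsesN G n (testE a) u (some s)) : s = u := by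
  cases a <;> exact h.not_some_inv.1
end TapeTests

section Automaton

variable {Q A Γ : Type} {M : DPPDA Q A Γ} {w : List A}

/-- The head position after a move in direction `d` from position `i`, when the top stack
entry carries the tag `t`. -/
def Dir.nextPos : Dir → ℕ → ℕ → ℕ
  | .left, _, i => i - 1
  | .down, _, i => i
  | .up, t, _ => t
  | .right, _, i => i + 1

theorem Dir.nextPos_of_ne_up {d : Dir} (hd : d ≠ .up) (t t' i : ℕ) :
    d.nextPos t i = d.nextPos t' i := by
  cases d <;> first | rfl | exact absurd rfl hd

theorem nextPos_le_length {q p : Q} {Z : Γ} {β : List Γ} {d : Dir} {t i : ℕ}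
    (htr : M.trans q (tapeNth w i) Z = some (p, β, d)) (ht : t ≤ w.length + 1)
    (hi : i ≤ w.length + 1) : d.nextPos t i ≤ w.length + 1 := by
  cases d with
  | right =>
      have : i ≤ w.length := by
        by_contra hlt
        rw [tapeNth_of_length_lt (by omega)] at htr
        exact M.no_right_rmark _ _ _ _ htr
      simp only [Dir.nextPos]; omega
  | _ => simp only [Dir.nextPos]; omega

theorem step_of_pop {q p : Q} {Z : Γ} {d : Dir} {t i : ℕ} {ρ : List (Γ × ℕ)}
    (htr : M.trans q (tapeNth w i) Z = some (p, [], d)) :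
    M.step w ⟨q, (Z, t) :: ρ, i⟩ = some ⟨p, ρ, d.nextPos t i⟩ := by
  cases d <;> simp [DPPDA.step, htr, Dir.nextPos]

theorem step_of_push {q p : Q} {Z X : Γ} {d : Dir} {t i : ℕ} {ρ : List (Γ × ℕ)}
    (htr : M.trans q (tapeNth w i) Z = some (p, [X], d)) :
    M.step w ⟨q, (Z, t) :: ρ, i⟩ =
      some ⟨p, (X, d.nextPos t i) :: (Z, t) :: ρ, d.nextPos t i⟩ := by
  cases d <;> simp [DPPDA.step, htr, Dir.nextPos]

def DPPDA.PushesAtMostOne (M : DPPDA Q A Γ) : Prop :=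
  ∀ q a Z p β d, M.trans q a Z = some (p, β, d) → β.length ≤ 1

theorem step_eq_some_inv (hpush : M.PushesAtMostOne)
    {q : Q} {Z : Γ} {t i : ℕ} {ρ : List (Γ × ℕ)} {c : Conf Q Γ}
    (h : M.step w ⟨q, (Z, t) :: ρ, i⟩ = some c) :
    (∃ p d, M.trans q (tapeNth w i) Z = some (p, [], d) ∧ c = ⟨p, ρ, d.nextPos t i⟩) ∨
    (∃ p X d, M.trans q (tapeNth w i) Z = some (p, [X], d) ∧
      c = ⟨p, (X, d.nextPos t i) :: (Z, t) :: ρ, d.nextPos t i⟩) := by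
  rcases htr : M.trans q (tapeNth w i) Z with _ | ⟨p, _ | ⟨X, _ | ⟨Y, β⟩⟩, d⟩
  · simp [DPPDA.step, htr] at h
  · rw [step_of_pop htr, Option.some_inj] at h
    exact .inl ⟨p, d, rfl, h.symm⟩
  · rw [step_of_push htr, Option.some_inj] at h
    exact .inr ⟨p, X, d, rfl, h.symm⟩
  · exact absurd (hpush _ _ _ _ _ _ htr) (by simp)

def Conf.appendStack (c : Conf Q Γ) (ρ : List (Γ × ℕ)) : Conf Q Γ :=
  ⟨c.state, c.stack ++ ρ, c.pos⟩

theorem step_appendStack {c c' : Conf Q Γ} (ρ : List (Γ × ℕ)) (h : M.step w c = some c') :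
    M.step w (c.appendStack ρ) = some (c'.appendStack ρ) := by
  obtain ⟨q, _ | ⟨⟨Z, t⟩, st⟩, i⟩ := c
  · cases h
  rcases htr : M.trans q (tapeNth w i) Z with _ | ⟨p, β, d⟩
  · simp [DPPDA.step, htr] at h
  · cases β <;> cases d <;> simp [DPPDA.step, htr, Conf.appendStack] at h ⊢ <;> subst h <;> simp

theorem DPPDA.Reaches.appendStack {c c' : Conf Q Γ} (ρ : List (Γ × ℕ))
    (h : M.Reaches w c c') : M.Reaches w (c.appendStack ρ) (c'.appendStack ρ) := by
  induction h with
  | refl => exact .refl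
  | tail _ hstep ih => exact ih.tail (step_appendStack ρ hstep)

end Automaton

section PopRun

variable {Q A Γ : Type} {M : DPPDA Q A Γ} {w : List A}

/-- `PopRun M w q Z i p d l`: started in state `q` with head at `i` and `Z` on top of the
stack, `M` eventually pops this `Z` into state `p` by a move in direction `d` made at head
position `l`. An entry pushed by `M` is tagged with the head position where its own run
starts, so tags are not recorded; a push never moves `↑`, so the tag argument of
`Dir.nextPos` is irrelevant in `push`. -/
inductive PopRun (M : DPPDA Q A Γ) (w : List A) :
    Q → Γ → ℕ → Q → Dir → ℕ → Prop where
  | pop {q p : Q} {Z : Γ} {i : ℕ} {d : Dir} :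
      M.trans q (tapeNth w i) Z = some (p, [], d) → PopRun M w q Z i p d i
  | push {q r s p : Q} {Z X : Γ} {i lX l : ℕ} {d dX d' : Dir} :
      M.trans q (tapeNth w i) Z = some (r, [X], d) →
      PopRun M w r X (d.nextPos i i) s dX lX →
      PopRun M w s Z (dX.nextPos (d.nextPos i i) lX) p d' l →
      PopRun M w q Z i p d' l

theorem PopRun.reaches {q p : Q} {Z : Γ} {i l : ℕ} {d : Dir} (h : PopRun M w q Z i p d l)
    (t : ℕ) : ∃ r, M.Reaches w ⟨q, [(Z, t)], i⟩ ⟨r, [(Z, t)], l⟩ ∧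
      M.trans r (tapeNth w l) Z = some (p, [], d) := by
  induction h generalizing t with
  | pop htr => exact ⟨_, .refl, htr⟩
  | @push q r s p Z X i lX l d dX d' htr _ _ ihX ihZ =>
      have hd : d.nextPos t i = d.nextPos i i :=
        Dir.nextPos_of_ne_up (by rintro rfl; cases M.up_pop _ _ _ _ _ htr) _ _ _
      obtain ⟨rX, hX, htrX⟩ := ihX (d.nextPos i i)
      obtain ⟨rZ, hZ, htrZ⟩ := ihZ t
      refine ⟨rZ, .head (step_of_push htr) ?_, htrZ⟩
      rw [hd]
      exact (hX.appendStack [(Z, t)]).trans (.head (step_of_pop htrX) hZ)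

theorem PopRun.dir_eq (hpop : ∀ q a Z p d, M.trans q a Z = some (p, ([] : List Γ), d) →
      d = Dir.down ∨ d = Dir.up)
    {q p : Q} {Z : Γ} {i l : ℕ} {d : Dir} (h : PopRun M w q Z i p d l) :
    d = .down ∨ d = .up :=
  let ⟨_, _, htr⟩ := h.reaches 0
  hpop _ _ _ _ _ htr

theorem le_nextPos_of_trans (hM : M.OneWay) {q p : Q} {a : TSym A} {Z : Γ} {β : List Γ}
    {d : Dir} (htr : M.trans q a Z = some (p, β, d)) {m t i : ℕ} (ht : m ≤ t) (hi : m ≤ i) :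
    m ≤ d.nextPos t i := by
  cases d <;> simp only [Dir.nextPos] <;> first | omega | exact absurd htr (hM _ _ _ _ _)

theorem PopRun.le_pos (hM : M.OneWay) {q p : Q} {Z : Γ} {i l : ℕ} {d : Dir}
    (h : PopRun M w q Z i p d l) : i ≤ l := by
  induction h with
  | pop => exact le_rfl
  | @push _ _ _ _ _ _ i _ _ d _ _ htr hX _ ihX ihZ =>
      obtain ⟨_, _, htrX⟩ := hX.reaches 0
      have hi₁ : i ≤ d.nextPos i i := le_nextPos_of_trans hM htr le_rfl le_rfl
      have hk := le_nextPos_of_trans hM htrX le_rfl ihX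
      omega

theorem PopRun.le_nextPos (hM : M.OneWay) {q p : Q} {Z : Γ} {i l : ℕ} {d : Dir}
    (h : PopRun M w q Z i p d l) : i ≤ d.nextPos i l :=
  let ⟨_, _, htr⟩ := h.reaches 0
  le_nextPos_of_trans hM htr le_rfl (h.le_pos hM)

theorem PopRun.pos_le_length {q p : Q} {Z : Γ} {i l : ℕ} {d : Dir}
    (h : PopRun M w q Z i p d l) (hi : i ≤ w.length + 1) : l ≤ w.length + 1 := by
  induction h with
  | pop => exact hi
  | push htr hX _ ihX ihZ =>
      obtain ⟨_, _, htrX⟩ := hX.reaches 0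
      have hi₁ := nextPos_le_length htr hi hi
      exact ihZ (nextPos_le_length htrX hi₁ (ihX hi₁))

/-- `StackRun M w q st i p d l`: started in `(q, st, i)`, `M` pops the entries of `st` one
after the other, the last one into state `p` by a move in direction `d` made at head
position `l`. -/
inductive StackRun (M : DPPDA Q A Γ) (w : List A) :
    Q → List (Γ × ℕ) → ℕ → Q → Dir → ℕ → Prop where
  | last {q p : Q} {Z : Γ} {t i l : ℕ} {d : Dir} :
      PopRun M w q Z i p d l → StackRun M w q [(Z, t)] i p d l
  | cons {q s p : Q} {Z : Γ} {t i l' l : ℕ} {d' d : Dir} {ρ : List (Γ × ℕ)} :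
      PopRun M w q Z i s d' l' → StackRun M w s ρ (d'.nextPos t l') p d l →
      StackRun M w q ((Z, t) :: ρ) i p d l

theorem stackRun_of_reaches (hpush : M.PushesAtMostOne)
    {c : Conf Q Γ} {r p : Q} {Z : Γ} {t l : ℕ} {d : Dir}
    (h : M.Reaches w c ⟨r, [(Z, t)], l⟩) (htr : M.trans r (tapeNth w l) Z = some (p, [], d)) :
    StackRun M w c.state c.stack c.pos p d l := by
  induction h using Relation.ReflTransGen.head_induction_on with
  | refl => exact .last (.pop htr)
  | @head c c₁ hstep _ ih =>
      obtain ⟨q, _ | ⟨⟨Z₁, t₁⟩, ρ⟩, i⟩ := c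
      · cases hstep
      rcases step_eq_some_inv hpush hstep with
        ⟨s, d₁, htr₁, rfl⟩ | ⟨r₁, X, d₁, htr₁, rfl⟩
      · cases ρ with
        | nil => cases ih
        | cons => exact .cons (.pop htr₁) ih
      · have hd : d₁.nextPos t₁ i = d₁.nextPos i i :=
          Dir.nextPos_of_ne_up (by rintro rfl; cases M.up_pop _ _ _ _ _ htr₁) _ _ _
        rcases ih with _ | ⟨hX, hrest⟩
        rw [hd] at hX hrest
        rcases hrest with hZ | ⟨hZ, hrest⟩
        · exact .last (.push htr₁ hX hZ)
        · exact .cons (.push htr₁ hX hZ) hrest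

theorem endsPop_iff_exists_popRun (hpush : M.PushesAtMostOne)
    {q p : Q} {Z : Γ} {t i j : ℕ} {d : Dir} :
    EndsPop M w q Z t i p d j ↔ ∃ l, PopRun M w q Z i p d l ∧ j = d.nextPos t l := by
  constructor
  · rintro ⟨⟨r, st, l⟩, hreach, rfl, htr, hstep⟩
    rw [step_of_pop htr, Option.some_inj, Conf.mk.injEq] at hstep
    refine ⟨l, ?_, hstep.2.2.symm⟩
    rcases stackRun_of_reaches hpush hreach htr with h | ⟨_, h⟩
    · exact h
    · cases h
  · rintro ⟨l, h, rfl⟩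
    obtain ⟨r, hreach, htr⟩ := h.reaches t
    exact ⟨_, hreach, rfl, htr, step_of_pop htr⟩

theorem forall_endsPop_down_iff (hpush : M.PushesAtMostOne)
    {q p : Q} {Z : Γ} {i j : ℕ} :
    (∀ t, EndsPop M w q Z t i p .down j) ↔ PopRun M w q Z i p .down j := by
  simp only [endsPop_iff_exists_popRun hpush, Dir.nextPos, exists_eq_right']
  exact ⟨fun h => h 0, fun h _ => h⟩

theorem forall_endsPop_up_iff (hpush : M.PushesAtMostOne)
    {q p : Q} {Z : Γ} {i : ℕ} :
    (∀ t, EndsPop M w q Z t i p .up t) ↔ ∃ l, PopRun M w q Z i p .up l := by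
  simp only [endsPop_iff_exists_popRun hpush, Dir.nextPos, and_true]
  exact ⟨fun h => h 0, fun h _ => h⟩

end PopRun

section Grammar

variable {Q A Γ : Type} [Fintype Q] [DecidableEq Q] [Fintype A] {M : DPPDA Q A Γ} {w : List A}

theorem ruleOf_of_ne_ud {q p : Q} {Z : Γ} {t : PTag} (ht : t ≠ .ud) :
    ruleOf M (some (q, Z, p, t)) =
      choiceE ((TSym.rmark :: (Finset.univ : Finset A).toList.map TSym.sym).map
        (altOf M q Z p t)) := by
  cases t <;> first | rfl | exact absurd rfl ht

theorem parses_altOf_of_ne {q p : Q} {Z : Γ} {t : PTag} {a : TSym A} {i : ℕ} (hi : 1 ≤ i)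
    (ha : a ≠ tapeNth w i) : Parses (PEGof M) (altOf M q Z p t a) (w.drop (i - 1)) none := by
  have hc := parses_consumeE_of_ne (G := PEGof M) hi ha
  have ht := parses_testE_of_ne (G := PEGof M) hi ha
  unfold altOf
  split
  · exact parses_failE _
  · split <;> (try split) <;> first
      | exact parses_failE _
      | exact ht
      | exact parses_choiceE_none fun e he => by
          obtain ⟨s, -, rfl⟩ := List.mem_map.mp he
          first | exact .seq_fail hc | exact .seq_fail ht | exact (Parses.seq_fail hc).andPred

theorem parses_nt_of_altOf {q p : Q} {Z : Γ} {t : PTag} {i : ℕ} {r : Option (List A)}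
    (hi : 1 ≤ i) (ht : t ≠ .ud)
    (h : Parses (PEGof M) (altOf M q Z p t (tapeNth w i)) (w.drop (i - 1)) r) :
    Parses (PEGof M) (.nt (some (q, Z, p, t))) (w.drop (i - 1)) r := by
  refine .nt ?_
  change Parses (PEGof M) (ruleOf M _) _ _
  rw [ruleOf_of_ne_ud ht]
  refine parses_choiceE_map_of_nodup ?_ ?_ h fun a _ ha => parses_altOf_of_ne hi ha
  · cases hd : w.drop (i - 1) with
    | nil => simp [tapeNth_of_drop_eq_nil hi hd]
    | cons c _ => simp [tapeNth_of_drop_eq_cons hi hd]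
  · exact (Finset.nodup_toList _).map (fun _ _ h => by injection h) |>.cons (by simp)

theorem ParsesN.altOf_of_nt {q p : Q} {Z : Γ} {t : PTag} {i n : ℕ} {s : List A}
    (hi : 1 ≤ i) (ht : t ≠ .ud)
    (h : ParsesN (PEGof M) n (.nt (some (q, Z, p, t))) (w.drop (i - 1)) (some s)) :
    ∃ m < n, ParsesN (PEGof M) m (altOf M q Z p t (tapeNth w i)) (w.drop (i - 1)) (some s) := by
  obtain ⟨m, hm, h⟩ := h.nt_inv
  change ParsesN (PEGof M) m (ruleOf M _) _ _ at h
  rw [ruleOf_of_ne_ud ht] at h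
  obtain ⟨e, he, m', hm', h⟩ := h.choiceE_some_inv
  obtain ⟨a, -, rfl⟩ := List.mem_map.mp he
  obtain rfl : a = tapeNth w i := by
    by_contra ha
    cases (parses_altOf_of_ne hi ha).unique h.toParses
  exact ⟨m', by omega, h⟩

end Grammar

section PopResult

variable {Q A : Type} [DecidableEq Q] {w : List A}

/-- The result of parsing `[qZp t]` from position `i` when the run from `q` with `Z` on top
pops `Z` into state `p₀` by a move in direction `d₀` made at head position `l`. -/
def popResult (w : List A) (p p₀ : Q) (d₀ : Dir) (i l : ℕ) : PTag → Option (List A)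
  | .dn => if p = p₀ ∧ d₀ = .down then some (w.drop (l - 1)) else none
  | .bar => if p = p₀ ∧ d₀ = .up then some (w.drop (l - 1)) else none
  | .up => if p = p₀ ∧ d₀ = .up then some (w.drop (i - 1)) else none
  | .ud => if p = p₀ then some (w.drop (d₀.nextPos i l - 1)) else none

theorem popResult_ud {p p₀ : Q} {d₀ : Dir} (hd : d₀ = .down ∨ d₀ = .up) (i l : ℕ) :
    popResult w p p₀ d₀ i l .ud =
      (popResult w p p₀ d₀ i l .dn).or (popResult w p p₀ d₀ i l .up) := by
  rcases hd with rfl | rfl <;> by_cases hp : p = p₀ <;> simp [popResult, hp, Dir.nextPos]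

theorem popResult_up {p p₀ : Q} {d₀ : Dir} (i k l : ℕ) :
    popResult w p p₀ d₀ i l .up =
      (popResult w p p₀ d₀ k l .bar).map fun _ => w.drop (i - 1) := by
  simp only [popResult]
  split_ifs <;> rfl

end PopResult

section Completeness

variable {Q A Γ : Type} [Fintype Q] [DecidableEq Q] [Fintype A] {M : DPPDA Q A Γ} {w : List A}

theorem parses_nt_of_forall_altOf {q p p₀ : Q} {Z : Γ} {d₀ : Dir} {i l : ℕ}
    (hd : d₀ = .down ∨ d₀ = .up) (hi : 1 ≤ i)
    (h : ∀ t ≠ .ud, Parses (PEGof M) (altOf M q Z p t (tapeNth w i)) (w.drop (i - 1))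
      (popResult w p p₀ d₀ i l t)) (t : PTag) :
    Parses (PEGof M) (.nt (some (q, Z, p, t))) (w.drop (i - 1))
      (popResult w p p₀ d₀ i l t) := by
  by_cases ht : t = .ud
  · subst ht
    rw [popResult_ud hd]
    exact .nt <| (parses_nt_of_altOf hi (by decide) (h .dn (by decide))).choice
      (parses_nt_of_altOf hi (by decide) (h .up (by decide)))
  · exact parses_nt_of_altOf hi ht (h t ht)

theorem parses_altOf_pop {q p p₀ : Q} {Z : Γ} {d₀ : Dir} {i : ℕ}
    (htr : M.trans q (tapeNth w i) Z = some (p₀, [], d₀)) (hi : 1 ≤ i) {t : PTag}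
    (ht : t ≠ .ud) :
    Parses (PEGof M) (altOf M q Z p t (tapeNth w i)) (w.drop (i - 1))
      (popResult w p p₀ d₀ i i t) := by
  have htest := parses_testE_tapeNth (G := PEGof M) (w := w) hi
  unfold altOf
  rw [htr]
  rcases eq_or_ne p p₀ with rfl | hp
  · cases d₀ <;> cases t <;> first | exact absurd rfl ht | simpa [popResult] using htest |
      simpa [popResult] using parses_failE (G := PEGof M) (w.drop (i - 1))
  · cases d₀ <;> cases t <;> first | exact absurd rfl ht |
      simpa [popResult, hp, Ne.symm hp] using parses_failE (G := PEGof M) (w.drop (i - 1))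

theorem parses_altOf_push (hM : M.OneWay) {q r s₀ p p₀ : Q} {Z X : Γ} {d d' : Dir}
    {i k l : ℕ} (htr : M.trans q (tapeNth w i) Z = some (r, [X], d)) (hi : 1 ≤ i)
    (hX : ∀ s, Parses (PEGof M) (.nt (some (r, X, s, .ud))) (w.drop (d.nextPos i i - 1))
      (if s = s₀ then some (w.drop (k - 1)) else none))
    (hZ : ∀ t, Parses (PEGof M) (.nt (some (s₀, Z, p, t))) (w.drop (k - 1))
      (popResult w p p₀ d' k l t)) {t : PTag} (ht : t ≠ .ud) :
    Parses (PEGof M) (altOf M q Z p t (tapeNth w i)) (w.drop (i - 1))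
      (popResult w p p₀ d' i l t) := by
  have hbody : ∀ τ s, Parses (PEGof M)
      (.seq (.nt (some (r, X, s, .ud))) (.nt (some (s, Z, p, τ)))) (w.drop (d.nextPos i i - 1))
      (if s = s₀ then popResult w p p₀ d' k l τ else none) :=
    fun τ s => (hX s).seq_ite fun hs => hs ▸ hZ τ
  unfold altOf
  rw [htr]
  cases d with
  | left => exact absurd htr (hM _ _ _ _ _)
  | up => cases M.up_pop _ _ _ _ _ htr
  | right =>
      have hcons := parses_consumeE_tapeNth (G := PEGof M) hi
        fun h => M.no_right_rmark _ _ _ _ (h ▸ htr)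
      cases t
      · exact parses_choiceE_univ fun s => .seq_ok hcons (hbody .dn s)
      · rw [popResult_up i k l]
        exact parses_choiceE_univ fun s => by
          simpa [apply_ite (Option.map _)] using (Parses.seq_ok hcons (hbody .bar s)).andPred
      · exact absurd rfl ht
      · exact parses_choiceE_univ fun s => .seq_ok hcons (hbody .bar s)
  | down =>
      have htest := parses_testE_tapeNth (G := PEGof M) (w := w) hi
      cases t
      · exact parses_choiceE_univ fun s => .seq_ok htest (hbody .dn s)
      · rw [popResult_up i k l]
        exact parses_choiceE_univ fun s => by
          simpa [apply_ite (Option.map _), Dir.nextPos] using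
            Parses.seq_ok htest (hbody .bar s).andPred
      · exact absurd rfl ht
      · exact parses_choiceE_univ fun s => .seq_ok htest (hbody .bar s)

theorem parses_of_popRun (hM : M.NormalForm) {q p₀ : Q} {Z : Γ} {i l : ℕ} {d₀ : Dir}
    (h : PopRun M w q Z i p₀ d₀ l) (hi : 1 ≤ i) (p : Q) (t : PTag) :
    Parses (PEGof M) (.nt (some (q, Z, p, t))) (w.drop (i - 1))
      (popResult w p p₀ d₀ i l t) := by
  induction h generalizing p t with
  | pop htr =>
      exact parses_nt_of_forall_altOf (hM.2.1 _ _ _ _ _ htr) hi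
        (fun t ht => parses_altOf_pop htr hi ht) t
  | @push q r s p₀ Z X i lX l d dX d' htr hX hZ ihX ihZ =>
      have hi₁ : i ≤ d.nextPos i i := le_nextPos_of_trans hM.1 htr le_rfl le_rfl
      have hk := hX.le_nextPos hM.1
      exact parses_nt_of_forall_altOf (hZ.dir_eq hM.2.1) hi
        (fun t ht => parses_altOf_push hM.1 htr hi (fun s => ihX (by omega) s .ud)
          (ihZ (by omega) p) ht) t

end Completeness

section Soundness

variable {Q A Γ : Type} [Fintype Q] [DecidableEq Q] [Fintype A] {M : DPPDA Q A Γ} {w : List A}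

theorem ParsesN.exists_of_altOf_push {q r p : Q} {Z X : Γ} {d : Dir} {t : PTag} {i n : ℕ}
    {s : List A} (htr : M.trans q (tapeNth w i) Z = some (r, [X], d)) (hi : 1 ≤ i)
    (h : ParsesN (PEGof M) n (altOf M q Z p t (tapeNth w i)) (w.drop (i - 1)) (some s)) :
    ∃ s₀ τ s', ∃ m < n, ParsesN (PEGof M) m
      (.seq (.nt (some (r, X, s₀, .ud))) (.nt (some (s₀, Z, p, τ))))
      (w.drop (d.nextPos i i - 1)) (some s') := by
  have hhead : ∀ {m e e' s}, m < n →
      (∀ {k u}, ParsesN (PEGof M) k e (w.drop (i - 1)) (some u) →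
        u = w.drop (d.nextPos i i - 1)) →
      ParsesN (PEGof M) m (.seq e e') (w.drop (i - 1)) (some s) →
      ∃ m' < n, ParsesN (PEGof M) m' e' (w.drop (d.nextPos i i - 1)) (some s) :=
    fun hm he h => by
      obtain ⟨u, n₁, -, n₂, h₂, h₁, h⟩ := h.seq_some_inv
      exact ⟨n₂, by omega, he h₁ ▸ h⟩
  have hconsume : ∀ {k u}, ParsesN (PEGof M) k (consumeE (tapeNth w i)) (w.drop (i - 1))
      (some u) → u = w.drop (Dir.right.nextPos i i - 1) := fun h => by
    rw [h.consumeE_some_inv, List.tail_drop, Nat.sub_add_cancel hi]; rfl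
  unfold altOf at h
  rw [htr] at h
  cases d <;> cases t <;> try exact absurd h ParsesN.not_failE_some
  all_goals
    obtain ⟨_, he, m, hm, h⟩ := h.choiceE_some_inv
    obtain ⟨s₀, -, rfl⟩ := List.mem_map.mp he
  · exact ⟨s₀, _, _, hhead hm (fun h => h.testE_some_inv) h⟩
  · obtain ⟨m', hm', h⟩ := hhead hm (fun h => h.testE_some_inv) h
    obtain ⟨-, v, m'', hm'', h⟩ := h.andPred_some_inv
    exact ⟨s₀, _, _, m'', by omega, h⟩
  · exact ⟨s₀, _, _, hhead hm (fun h => h.testE_some_inv) h⟩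
  · exact ⟨s₀, _, _, hhead hm hconsume h⟩
  · obtain ⟨-, v, m', hm', h⟩ := h.andPred_some_inv
    exact ⟨s₀, _, _, hhead (by omega) hconsume h⟩
  · exact ⟨s₀, _, _, hhead hm hconsume h⟩

theorem exists_popRun_of_parsesN (hM : M.NormalForm) (n : ℕ) :
    ∀ {q p : Q} {Z : Γ} {t : PTag} {i : ℕ} {s : List A}, 1 ≤ i →
      ParsesN (PEGof M) n (.nt (some (q, Z, p, t))) (w.drop (i - 1)) (some s) →
      ∃ p₀ d₀ l, PopRun M w q Z i p₀ d₀ l := by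
  induction n using Nat.strong_induction_on with
  | _ n ih =>
  intro q p Z t i s hi h
  by_cases ht : t = .ud
  · subst ht
    obtain ⟨m, hm, h⟩ := h.nt_inv
    change ParsesN (PEGof M) m (.choice (.nt (some (q, Z, p, .dn))) (.nt (some (q, Z, p, .up))))
      _ _ at h
    obtain ⟨m', hm', h | h⟩ := h.choice_some_inv <;> exact ih m' (by omega) hi h
  obtain ⟨m, hm, h⟩ := h.altOf_of_nt hi ht
  rcases htr : M.trans q (tapeNth w i) Z with _ | ⟨r, _ | ⟨X, _ | ⟨Y, β⟩⟩, d⟩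
  · unfold altOf at h
    rw [htr] at h
    exact absurd h ParsesN.not_failE_some
  · exact ⟨r, d, i, .pop htr⟩
  · obtain ⟨s₀, τ, s', m', hm', h⟩ := h.exists_of_altOf_push htr hi
    obtain ⟨v, n₁, hn₁, n₂, hn₂, hX, hZ⟩ := h.seq_some_inv
    have hi₁ : i ≤ d.nextPos i i := le_nextPos_of_trans hM.1 htr le_rfl le_rfl
    obtain ⟨p₁, d₁, l₁, hrunX⟩ := ih n₁ (by omega) (by omega) hX
    have hk := hrunX.le_nextPos hM.1
    -- by completeness, `[rXs₀↕]` succeeds only if the run of `X` pops into `s₀`, and it then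
    -- stops where the run of `Z` resumes
    have hres := (parses_of_popRun hM hrunX (by omega) s₀ .ud).unique hX.toParses
    obtain ⟨rfl, rfl⟩ := Option.ite_some_none_eq_some.mp hres
    obtain ⟨p₂, d₂, l₂, hrunZ⟩ := ih n₂ (by omega) (by omega) hZ
    exact ⟨p₂, d₂, l₂, .push htr hrunX hrunZ⟩
  · exact absurd (hM.2.2.1 _ _ _ _ _ _ htr) (by simp)

end Soundness

section Correctness

variable {Q A Γ : Type} [Fintype Q] [DecidableEq Q] [Fintype A] {M : DPPDA Q A Γ} {w : List A}

theorem parses_some_iff (hM : M.NormalForm) {q p : Q} {Z : Γ} {t : PTag} {i : ℕ}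
    {s : List A} (hi : 1 ≤ i) :
    Parses (PEGof M) (.nt (some (q, Z, p, t))) (w.drop (i - 1)) (some s) ↔
      ∃ p₀ d₀ l, PopRun M w q Z i p₀ d₀ l ∧ popResult w p p₀ d₀ i l t = some s := by
  constructor
  · intro h
    obtain ⟨n, hn⟩ := h.exists_parsesN
    obtain ⟨p₀, d₀, l, hrun⟩ := exists_popRun_of_parsesN hM n hi hn
    exact ⟨p₀, d₀, l, hrun, (parses_of_popRun hM hrun hi p t).unique h⟩
  · rintro ⟨p₀, d₀, l, hrun, hres⟩
    exact hres ▸ parses_of_popRun hM hrun hi p t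

theorem parses_dn_iff (hM : M.NormalForm) {q p : Q} {Z : Γ} {i j : ℕ} (hi : 1 ≤ i)
    (hin : i ≤ w.length + 1) (hij : i ≤ j) (hjn : j ≤ w.length + 1) :
    Parses (PEGof M) (.nt (some (q, Z, p, .dn))) (w.drop (i - 1)) (some (w.drop (j - 1))) ↔
      PopRun M w q Z i p .down j := by
  rw [parses_some_iff hM hi]
  constructor
  · rintro ⟨p₀, d₀, l, hrun, hres⟩
    obtain ⟨⟨rfl, rfl⟩, hdrop⟩ := Option.ite_some_none_eq_some.mp hres
    have hl := hrun.le_pos hM.1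
    rwa [eq_of_drop_sub_one_eq (by omega) (hrun.pos_le_length hin) (by omega) hjn hdrop] at hrun
  · exact fun hrun => ⟨p, .down, j, hrun, by simp [popResult]⟩

theorem parses_bar_iff (hM : M.NormalForm) {q p : Q} {Z : Γ} {i : ℕ} (hi : 1 ≤ i)
    (hin : i ≤ w.length + 1) :
    (∃ j, i ≤ j ∧ j ≤ w.length + 1 ∧ Parses (PEGof M) (.nt (some (q, Z, p, .bar)))
      (w.drop (i - 1)) (some (w.drop (j - 1)))) ↔ ∃ l, PopRun M w q Z i p .up l := by
  simp only [parses_some_iff hM hi]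
  constructor
  · rintro ⟨j, -, -, p₀, d₀, l, hrun, hres⟩
    obtain ⟨⟨rfl, rfl⟩, -⟩ := Option.ite_some_none_eq_some.mp hres
    exact ⟨l, hrun⟩
  · rintro ⟨l, hrun⟩
    exact ⟨l, hrun.le_pos hM.1, hrun.pos_le_length hin, p, .up, l, hrun, by simp [popResult]⟩

theorem parses_up_iff (hM : M.NormalForm) {q p : Q} {Z : Γ} {i : ℕ} (hi : 1 ≤ i) :
    Parses (PEGof M) (.nt (some (q, Z, p, .up))) (w.drop (i - 1)) (some (w.drop (i - 1))) ↔
      ∃ l, PopRun M w q Z i p .up l := by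
  rw [parses_some_iff hM hi]
  constructor
  · rintro ⟨p₀, d₀, l, hrun, hres⟩
    obtain ⟨⟨rfl, rfl⟩, -⟩ := Option.ite_some_none_eq_some.mp hres
    exact ⟨l, hrun⟩
  · exact fun ⟨l, hrun⟩ => ⟨p, .up, l, hrun, by simp [popResult]⟩

end Correctness

/-- Let `M` be a one-way DPPDA in normal form and `G_M` its
constructed PEG.  For every input `w = w₁⋯w_n`, states `q, p`, stack symbol `Z` and
position `1 ≤ i ≤ n+1` (the remaining input at position `j` being `w.drop (j-1)`):
(1) for every `i ≤ j ≤ n+1`, `R([qZp↓], w_i⋯w_n) = w_j⋯w_n` iff for every tag `i'`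
the run of `M` from `(q, (Z, i'), i)` ends by popping `Z` in state `p` at head
position `j` with final pop direction `↓`;
(2) there exists `i ≤ j ≤ n+1` with `R([qZp̄], w_i⋯w_n) = w_j⋯w_n` iff for every
tag `i'` the run from `(q, (Z, i'), i)` ends by popping `Z` in state `p` at head
position `i'` with final pop direction `↑`;
(3) `R([qZp↑], w_i⋯w_n) = w_i⋯w_n` iff for every tag `i'` the run from
`(q, (Z, i'), i)` ends by popping `Z` in state `p` at head position `i'` with final
pop direction `↑`. -/
theorem pegOf_simulates_dppda {Q A Γ : Type} [Fintype Q] [DecidableEq Q] [Fintype A]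
    (M : DPPDA Q A Γ) (hM : M.NormalForm) (w : List A) (q p : Q) (Z : Γ)
    (i : ℕ) (hi : 1 ≤ i) (hin : i ≤ w.length + 1) :
    (∀ j, i ≤ j → j ≤ w.length + 1 →
      (Parses (PEGof M) (.nt (some (q, Z, p, PTag.dn)))
          (w.drop (i - 1)) (some (w.drop (j - 1))) ↔
        ∀ i' : ℕ, EndsPop M w q Z i' i p Dir.down j)) ∧
    ((∃ j, i ≤ j ∧ j ≤ w.length + 1 ∧
        Parses (PEGof M) (.nt (some (q, Z, p, PTag.bar)))
          (w.drop (i - 1)) (some (w.drop (j - 1)))) ↔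
      ∀ i' : ℕ, EndsPop M w q Z i' i p Dir.up i') ∧
    (Parses (PEGof M) (.nt (some (q, Z, p, PTag.up)))
        (w.drop (i - 1)) (some (w.drop (i - 1))) ↔
      ∀ i' : ℕ, EndsPop M w q Z i' i p Dir.up i') := by
  rw [forall_endsPop_up_iff hM.2.2.1]
  refine ⟨fun j hij hjn => ?_, parses_bar_iff hM hi hin, parses_up_iff hM hi⟩
  rw [forall_endsPop_down_iff hM.2.2.1]
  exact parses_dn_iff hM hi hin hij hjn
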